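/- arXiv:2512.17809 — 9 statements merged into one kernel-verified Lean document; each statement's English description precedes it below -/
import Mathlib

section
/- Let M = S + iK be a 2×2 Hermitian complex matrix, where S is real symmetric and K is real skew-symmetric, both invertible. Then M is positive definite if and only if S is positive definite and S + K S⁻¹ K is positive definite. -/
/-!
Writing `x = u + i v`, the real part of `x* M x` is the quadratic form of the real block matrix
`[[S, -K], [K, S]]` at `(u, v)`, and the imaginary part vanishes since `M` is Hermitian; so `M` is
positive definite iff this block matrix is. As `K` is skew-symmetric, the lower-left block is the
transpose of the upper-right one, and the Schur complement criterion turns positive definiteness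
of the block matrix into that of `S` and of `S - (-K)ᵀ S⁻¹ (-K) = S + K S⁻¹ K`.
-/

open Matrix Complex
open scoped ComplexOrder

namespace Matrix

section SchurComplement

variable {m n K : Type*} [Fintype m] [Fintype n] [DecidableEq m]
  [Field K] [PartialOrder K] [StarRing K] [StarOrderedRing K]

theorem posDef_fromBlocks₁₁_iff {A : Matrix m m K} (B : Matrix m n K) (D : Matrix n n K) :
    (fromBlocks A B Bᴴ D).PosDef ↔ A.PosDef ∧ (D - Bᴴ * A⁻¹ * B).PosDef := by
  have schur (hA : A.PosDef) (x : m → K) (y : n → K) :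
      star (x ⊕ᵥ y) ⬝ᵥ (fromBlocks A B Bᴴ D *ᵥ (x ⊕ᵥ y)) =
        star (x + (A⁻¹ * B) *ᵥ y) ⬝ᵥ (A *ᵥ (x + (A⁻¹ * B) *ᵥ y)) +
          star y ⬝ᵥ ((D - Bᴴ * A⁻¹ * B) *ᵥ y) := by
    let := hA.isUnit.invertible
    simpa only [dotProduct_mulVec] using schur_complement_eq₁₁ B D x y hA.1
  constructor
  · intro h
    have hA : A.PosDef := h.submatrix Sum.inl_injective
    refine ⟨hA, .of_dotProduct_mulVec_pos ((IsHermitian.fromBlocks₁₁ B D hA.1).1 h.1)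
      fun y hy => ?_⟩
    have := h.dotProduct_mulVec_pos (x := -((A⁻¹ * B) *ᵥ y) ⊕ᵥ y) fun h0 =>
      hy (funext fun i => congrFun h0 (.inr i))
    rwa [schur hA, neg_add_cancel, star_zero, zero_dotProduct, zero_add] at this
  · rintro ⟨hA, hD⟩
    refine .of_dotProduct_mulVec_pos ((IsHermitian.fromBlocks₁₁ B D hA.1).2 hD.1)
      fun v hv => ?_
    rw [← Sum.elim_comp_inl_inr v, schur hA]
    rcases eq_or_ne (v ∘ Sum.inr) 0 with hy | hy
    · have hx : v ∘ Sum.inl ≠ 0 := fun hx =>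
        hv (by ext (i | i); exacts [congrFun hx i, congrFun hy i])
      simpa [hy] using hA.dotProduct_mulVec_pos hx
    · exact add_pos_of_nonneg_of_pos (hA.posSemidef.dotProduct_mulVec_nonneg _)
        (hD.dotProduct_mulVec_pos hy)

end SchurComplement

section Realification

variable {n : Type*}

def realification (M : Matrix n n ℂ) : Matrix (n ⊕ n) (n ⊕ n) ℝ :=
  fromBlocks (M.map re) (-M.map im) (M.map im) (M.map re)

@[simps]
def reImEquiv : (n → ℂ) ≃ (n ⊕ n → ℝ) where
  toFun x := Sum.elim (fun i => (x i).re) (fun i => (x i).im)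
  invFun v i := ⟨v (.inl i), v (.inr i)⟩
  left_inv _ := rfl
  right_inv v := by ext (i | i) <;> rfl

theorem reImEquiv_eq_zero_iff {x : n → ℂ} : reImEquiv x = 0 ↔ x = 0 := by
  rw [← Equiv.eq_symm_apply]; rfl

theorem IsHermitian.isHermitian_realification {M : Matrix n n ℂ} (hM : M.IsHermitian) :
    M.realification.IsHermitian := by
  have h i j : star (M j i) = M i j := by simpa using congrFun (congrFun hM i) j
  refine isHermitian_fromBlocks_iff.2 ⟨?_, ?_, ?_, ?_⟩ <;> ext i j <;> simp [← h i j]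

theorem realification_map_ofReal_add_I_smul (S K : Matrix n n ℝ) :
    (S.map ofReal + I • K.map ofReal).realification = fromBlocks S (-K) K S := by
  ext (i | i) (j | j) <;> simp [realification]

theorem isHermitian_map_ofReal_add_I_smul {S K : Matrix n n ℝ} (hS : Sᵀ = S) (hK : Kᵀ = -K) :
    (S.map ofReal + I • K.map ofReal).IsHermitian := by
  ext i j
  have hSij : S j i = S i j := congrFun (congrFun hS i) j
  have hKij : K j i = -K i j := congrFun (congrFun hK i) j
  simp [hSij, hKij]

variable [Fintype n]

theorem re_star_dotProduct_mulVec_eq_realification (M : Matrix n n ℂ) (x : n → ℂ) :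
    (star x ⬝ᵥ (M *ᵥ x)).re = star (reImEquiv x) ⬝ᵥ (M.realification *ᵥ reImEquiv x) := by
  simp only [dotProduct, mulVec, realification, reImEquiv_apply, Fintype.sum_sum_type,
    fromBlocks_apply₁₁, fromBlocks_apply₁₂, fromBlocks_apply₂₁, fromBlocks_apply₂₂,
    Sum.elim_inl, Sum.elim_inr, Pi.star_apply, star_trivial, map_apply, neg_apply,
    Finset.mul_sum, ← Finset.sum_add_distrib, re_sum]
  refine Finset.sum_congr rfl fun i _ => Finset.sum_congr rfl fun j _ => ?_
  simp only [RCLike.star_def, mul_re, mul_im, conj_re, conj_im]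
  ring

theorem IsHermitian.posDef_iff_posDef_realification {M : Matrix n n ℂ} (hM : M.IsHermitian) :
    M.PosDef ↔ M.realification.PosDef := by
  simp only [posDef_iff_dotProduct_mulVec, iff_true_intro hM,
    iff_true_intro hM.isHermitian_realification, true_and, ← reImEquiv.forall_congr_right,
    ne_eq, reImEquiv_eq_zero_iff]
  refine forall_congr' fun x => imp_congr_right fun _ => ?_
  have him : (star x ⬝ᵥ (M *ᵥ x)).im = 0 := hM.im_star_dotProduct_mulVec_self x
  rw [← re_star_dotProduct_mulVec_eq_realification, lt_def, zero_re, zero_im, him,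
    and_iff_left rfl]

end Realification

end Matrix

theorem posdef_iff_real_imaginary_parts_general (S K : Matrix (Fin 2) (Fin 2) ℝ)
    (hS : Sᵀ = S) (hK : Kᵀ = -K)
    (M : Matrix (Fin 2) (Fin 2) ℂ)
    (hM : M = S.map Complex.ofReal + Complex.I • K.map Complex.ofReal) :
    M.PosDef ↔ S.PosDef ∧ (S + K * S⁻¹ * K).PosDef := by
  have hK' : (-K)ᴴ = K := by
    rw [conjTranspose_neg, conjTranspose_eq_transpose_of_trivial, hK, neg_neg]
  have hblocks : M.realification = fromBlocks S (-K) (-K)ᴴ S := by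
    rw [hM, realification_map_ofReal_add_I_smul, hK']
  have hherm : M.IsHermitian := hM ▸ isHermitian_map_ofReal_add_I_smul hS hK
  rw [hherm.posDef_iff_posDef_realification, hblocks,
    posDef_fromBlocks₁₁_iff, hK', Matrix.mul_neg, sub_neg_eq_add]

theorem posdef_iff_real_imaginary_parts (S K : Matrix (Fin 2) (Fin 2) ℝ)
    (hS : Sᵀ = S) (hK : Kᵀ = -K)
    (hSinv : IsUnit S.det) (hKinv : IsUnit K.det)
    (M : Matrix (Fin 2) (Fin 2) ℂ)
    (hM : M = S.map Complex.ofReal + Complex.I • K.map Complex.ofReal) :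
    M.PosDef ↔ S.PosDef ∧ (S + K * S⁻¹ * K).PosDef :=
  posdef_iff_real_imaginary_parts_general S K hS hK M hM
end

section
/- Douglas factorization for matrices: for square complex matrices A and B of the same size, A*A ≥ B*B (in the Loewner order) if and only if there exists a matrix F with F*F ≤ I such that B = F A. -/
/-!
Both sides say that `‖B x‖ ≤ ‖A x‖` for every `x`: the quadratic form of `Aᴴ A - Bᴴ B` is
`‖A x‖² - ‖B x‖²`, and `Fᴴ F ≤ 1` means that `F` is a contraction. Conversely, if
`‖B x‖ ≤ ‖A x‖` then `ker A ≤ ker B`, so `A x ↦ B x` is a well-defined contraction on the range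
of `A`; composing it with the orthogonal projection onto that range gives `F`.
-/

open Matrix
open scoped ComplexOrder

namespace LinearMap

theorem exists_comp_rangeRestrict_eq_of_norm_le {R E F G : Type*} [Ring R]
    [AddCommGroup E] [Module R E] [SeminormedAddCommGroup F] [Module R F]
    [NormedAddCommGroup G] [Module R G] {f : E →ₗ[R] F} {g : E →ₗ[R] G}
    (h : ∀ x, ‖g x‖ ≤ ‖f x‖) :
    ∃ T : range f →ₗ[R] G, (∀ y, ‖T y‖ ≤ ‖y‖) ∧ T ∘ₗ f.rangeRestrict = g := by
  have hker : ker f ≤ ker g := fun x hx ↦ by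
    simpa [mem_ker.mp hx] using h x
  set T := (ker f).liftQ g hker ∘ₗ f.quotKerEquivRange.symm.toLinearMap
  have hT : ∀ x, T (f.rangeRestrict x) = g x := fun x ↦ by
    change (ker f).liftQ g hker (f.quotKerEquivRange.symm ⟨f x, mem_range_self f x⟩) = g x
    rw [quotKerEquivRange_symm_apply_image]
    rfl
  refine ⟨T, ?_, LinearMap.ext hT⟩
  rintro ⟨_, x, rfl⟩
  exact (congrArg norm (hT x)).trans_le (h x)

theorem exists_comp_eq_of_norm_le {𝕜 E F G : Type*} [RCLike 𝕜]
    [AddCommGroup E] [Module 𝕜 E] [NormedAddCommGroup F] [InnerProductSpace 𝕜 F]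
    [NormedAddCommGroup G] [Module 𝕜 G] {f : E →ₗ[𝕜] F} {g : E →ₗ[𝕜] G}
    [(range f).HasOrthogonalProjection] (h : ∀ x, ‖g x‖ ≤ ‖f x‖) :
    ∃ T : F →ₗ[𝕜] G, (∀ y, ‖T y‖ ≤ ‖y‖) ∧ T ∘ₗ f = g := by
  obtain ⟨T, hT, hTf⟩ := exists_comp_rangeRestrict_eq_of_norm_le h
  refine ⟨T ∘ₗ (range f).orthogonalProjectionOnto.toLinearMap, fun y ↦ ?_, ?_⟩
  · exact (hT _).trans ((range f).norm_orthogonalProjectionOnto_apply_le y)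
  · rw [← hTf]
    ext x
    exact congrArg T ((range f).orthogonalProjectionOnto_mem_subspace_eq_self (f.rangeRestrict x))

section FiniteDimensional

variable {𝕜 E F G : Type*} [RCLike 𝕜] [NormedAddCommGroup E] [InnerProductSpace 𝕜 E]
  [NormedAddCommGroup F] [InnerProductSpace 𝕜 F] [NormedAddCommGroup G] [InnerProductSpace 𝕜 G]
  [FiniteDimensional 𝕜 E] [FiniteDimensional 𝕜 F] [FiniteDimensional 𝕜 G]

theorem re_inner_adjoint_comp_self_apply (f : E →ₗ[𝕜] F) (x : E) :
    RCLike.re (inner 𝕜 ((f.adjoint ∘ₗ f) x) x) = ‖f x‖ ^ 2 := by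
  rw [comp_apply, adjoint_inner_left, inner_self_eq_norm_sq]

theorem isPositive_adjoint_comp_self_sub_iff (f : E →ₗ[𝕜] F) (g : E →ₗ[𝕜] G) :
    (f.adjoint ∘ₗ f - g.adjoint ∘ₗ g).IsPositive ↔ ∀ x, ‖g x‖ ≤ ‖f x‖ := by
  have hsymm := (isPositive_adjoint_comp_self f).isSymmetric.sub
    (isPositive_adjoint_comp_self g).isSymmetric
  simp only [IsPositive, hsymm, true_and, sub_apply, inner_sub_left, map_sub,
    re_inner_adjoint_comp_self_apply, sub_nonneg]
  exact forall_congr' fun x ↦ sq_le_sq₀ (norm_nonneg _) (norm_nonneg _)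

end FiniteDimensional

end LinearMap

namespace Matrix

variable {𝕜 m n k : Type*} [RCLike 𝕜] [Fintype m] [Fintype n] [Fintype k] [DecidableEq n]

theorem posSemidef_conjTranspose_mul_self_sub_iff (A : Matrix m n 𝕜) (B : Matrix k n 𝕜) :
    (Aᴴ * A - Bᴴ * B).PosSemidef ↔ ∀ x, ‖toEuclideanLin B x‖ ≤ ‖toEuclideanLin A x‖ := by
  classical
  rw [← isPositive_toEuclideanLin_iff, map_sub, toLpLin_mul _ 2, toLpLin_mul _ 2,
    toEuclideanLin_conjTranspose_eq_adjoint, toEuclideanLin_conjTranspose_eq_adjoint]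
  exact LinearMap.isPositive_adjoint_comp_self_sub_iff _ _

theorem posSemidef_one_sub_conjTranspose_mul_self_iff (F : Matrix m n 𝕜) :
    (1 - Fᴴ * F).PosSemidef ↔ ∀ x, ‖toEuclideanLin F x‖ ≤ ‖x‖ := by
  simpa using posSemidef_conjTranspose_mul_self_sub_iff (1 : Matrix n n 𝕜) F

end Matrix

theorem douglas_factorization (n : ℕ) (A B : Matrix (Fin n) (Fin n) ℂ) :
    (Aᴴ * A - Bᴴ * B).PosSemidef ↔
      ∃ F : Matrix (Fin n) (Fin n) ℂ, ((1 : Matrix (Fin n) (Fin n) ℂ) - Fᴴ * F).PosSemidef ∧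
        B = F * A := by
  simp_rw [posSemidef_conjTranspose_mul_self_sub_iff,
    posSemidef_one_sub_conjTranspose_mul_self_iff]
  constructor
  · intro h
    obtain ⟨T, hT, hTA⟩ := LinearMap.exists_comp_eq_of_norm_le h
    refine ⟨toEuclideanLin.symm T, by simpa using hT, toEuclideanLin.injective ?_⟩
    rw [toLpLin_mul_same, LinearEquiv.apply_symm_apply, hTA]
  · rintro ⟨F, hF, rfl⟩ x
    simpa using hF (toEuclideanLin A x)
end

section
/- Let K = [[a,b],[b,d]] be a real symmetric 2×2 matrix, and let η > |ζ|/2 > 0 be real numbers. If K ≥ 0 and K ≤ η·1 + i(ζ/2)Ω (as complex Hermitian matrices), then Tr(K) ≤ 2η - |ζ|, with equality attained by K = (η - |ζ|/2)·1. -/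
/-!
Testing the constraint against `v = (1, t i)`, where `t = ±1` is the sign of `ζ`, gives
`v* (η 1 + i(ζ/2)Ω) v = 2η - |ζ|` while `Re (v* K v) = Tr K`, whence the bound. The extremal
`K = (η - |ζ|/2) 1` saturates it because `η 1 + i(ζ/2)Ω - K` is `|ζ|/2` times the rank-one
matrix `w w*` with `w = (1, -t i)`.
-/

open Matrix
open scoped ComplexOrder

noncomputable def Ωc : Matrix (Fin 2) (Fin 2) ℂ := !![0, 1; -1, 0]

open Complex

noncomputable def boundMatrix (η ζ : ℝ) : Matrix (Fin 2) (Fin 2) ℂ :=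
  η • 1 + (I * ((ζ : ℂ) / 2)) • Ωc

lemma exists_mul_self_eq_one_and_mul_eq_abs (x : ℝ) : ∃ t : ℝ, t * t = 1 ∧ t * x = |x| := by
  rcases abs_cases x with ⟨hx, -⟩ | ⟨hx, -⟩
  · exact ⟨1, by norm_num, by rw [hx, one_mul]⟩
  · exact ⟨-1, by norm_num, by rw [hx, neg_one_mul]⟩

section

variable (η ζ t : ℝ)

lemma re_star_dotProduct_boundMatrix_sub_mulVec (ht : t * t = 1) (K : Matrix (Fin 2) (Fin 2) ℝ) :
    (star ![1, t * I] ⬝ᵥ (boundMatrix η ζ - K.map ofReal) *ᵥ ![1, t * I]).re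
      = 2 * η - t * ζ - K.trace := by
  simp [boundMatrix, Ωc, mulVec, dotProduct, Fin.sum_univ_two, one_apply, trace_fin_two]
  linear_combination (η - K 1 1) * ht

lemma trace_le_of_posSemidef_boundMatrix_sub (ht : t * t = 1) {K : Matrix (Fin 2) (Fin 2) ℝ}
    (hle : (boundMatrix η ζ - K.map ofReal).PosSemidef) :
    K.trace ≤ 2 * η - t * ζ := by
  have h := (le_def.mp (hle.dotProduct_mulVec_nonneg ![1, t * I])).1
  rw [zero_re, re_star_dotProduct_boundMatrix_sub_mulVec η ζ t ht] at h
  linarith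

lemma boundMatrix_sub_smul_one_eq (ht : t * t = 1) :
    boundMatrix η ζ - ((η - t * ζ / 2) • (1 : Matrix (Fin 2) (Fin 2) ℝ)).map ofReal
      = (t * ζ / 2) • vecMulVec ![1, -t * I] (star ![1, -t * I]) := by
  ext i j
  fin_cases i <;> fin_cases j <;>
    simp [boundMatrix, Ωc, vecMulVec, one_apply, Complex.ext_iff] <;> grind

end

theorem trace_max_under_constraint_general (η ζ : ℝ) (hη : η > |ζ|/2)
    (K : Matrix (Fin 2) (Fin 2) ℝ)
    (hle : (η • (1 : Matrix (Fin 2) (Fin 2) ℂ) + (Complex.I * ((ζ : ℂ)/2)) • Ωc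
              - K.map Complex.ofReal).PosSemidef) :
    K.trace ≤ 2*η - |ζ| ∧
    ((η - |ζ|/2) • (1 : Matrix (Fin 2) (Fin 2) ℝ)).PosSemidef ∧
    (η • (1 : Matrix (Fin 2) (Fin 2) ℂ) + (Complex.I * ((ζ : ℂ)/2)) • Ωc
        - (((η - |ζ|/2) • (1 : Matrix (Fin 2) (Fin 2) ℝ)).map Complex.ofReal)).PosSemidef ∧
    ((η - |ζ|/2) • (1 : Matrix (Fin 2) (Fin 2) ℝ)).trace = 2*η - |ζ| := by
  obtain ⟨t, ht, htζ⟩ := exists_mul_self_eq_one_and_mul_eq_abs ζ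
  refine ⟨?_, PosSemidef.one.smul (by linarith), ?_, ?_⟩
  · rw [← htζ]
    exact trace_le_of_posSemidef_boundMatrix_sub η ζ t ht hle
  · change (boundMatrix η ζ - _).PosSemidef
    rw [← htζ, boundMatrix_sub_smul_one_eq η ζ t ht, htζ]
    exact (posSemidef_vecMulVec_self_star _).smul (by positivity)
  · rw [trace_smul, trace_one, Fintype.card_fin, smul_eq_mul]
    push_cast
    ring

theorem trace_max_under_constraint (a b d η ζ : ℝ) (hη : η > |ζ|/2) (hζ : |ζ|/2 > 0)
    (K : Matrix (Fin 2) (Fin 2) ℝ) (hKdef : K = !![a, b; b, d])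
    (hK : K.PosSemidef)
    (hle : (η • (1 : Matrix (Fin 2) (Fin 2) ℂ) + (Complex.I * ((ζ : ℂ)/2)) • Ωc
              - K.map Complex.ofReal).PosSemidef) :
    K.trace ≤ 2*η - |ζ| ∧
    ((η - |ζ|/2) • (1 : Matrix (Fin 2) (Fin 2) ℝ)).PosSemidef ∧
    (η • (1 : Matrix (Fin 2) (Fin 2) ℂ) + (Complex.I * ((ζ : ℂ)/2)) • Ωc
        - (((η - |ζ|/2) • (1 : Matrix (Fin 2) (Fin 2) ℝ)).map Complex.ofReal)).PosSemidef ∧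
    ((η - |ζ|/2) • (1 : Matrix (Fin 2) (Fin 2) ℝ)).trace = 2*η - |ζ| :=
  trace_max_under_constraint_general η ζ hη K hle
end

section
/- Let K be a real symmetric positive semidefinite 2×2 matrix and a₀, b₀ real numbers with |a₀| < 2, |b₀| < 2, and a₀ ≥ b₀. If K(1 - i(a₀/2)Ω)K ≤ 1 - i(b₀/2)Ω in the Loewner order on complex Hermitian matrices, then Tr(K) ≤ 2√((2+b₀)/(2+a₀)), with equality for K = √((2+b₀)/(2+a₀))·1. -/
/-!
The vector `v = (1, i)` is an eigenvector of `iΩ`. For real symmetric `K` one has `v* K v = Tr K`,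
and evaluating the constraint at `v` gives
`0 ≤ 2 + b₀ - ((2 + a₀) (Tr K)² + (2 - a₀) ((K₀₀ - K₁₁)² + 4 K₀₁²)) / 4`;
as `a₀ < 2` the last term may be dropped, which bounds `Tr K`. For `K = c • 1` with
`c² = (2 + b₀) / (2 + a₀)` the constraint matrix is `(1 - c²) (1 + iΩ)`, where `1 + iΩ = u u*`
with `u = (1, -i)` and `c² ≤ 1` because `b₀ ≤ a₀`.
-/

open Matrix
open scoped ComplexOrder

open Complex

noncomputable def twistedOne (x : ℝ) : Matrix (Fin 2) (Fin 2) ℂ :=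
  1 - (I * ((x : ℂ) / 2)) • Ωc

lemma re_star_dotProduct_twistedOne_sub_mulVec (a b : ℝ) {K : Matrix (Fin 2) (Fin 2) ℝ}
    (hK : Kᵀ = K) :
    (star ![1, I] ⬝ᵥ
        ((twistedOne b - K.map ofReal * twistedOne a * K.map ofReal) *ᵥ ![1, I])).re =
      2 + b - ((2 + a) * K.trace ^ 2 + (2 - a) * ((K 0 0 - K 1 1) ^ 2 + 4 * K 0 1 ^ 2)) / 4 := by
  have hK10 : K 1 0 = K 0 1 := congrFun₂ hK 0 1
  simp only [twistedOne, Ωc, dotProduct, mulVec, Fin.sum_univ_two, mul_apply, map_apply,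
    Matrix.sub_apply, Matrix.smul_apply, one_apply, of_apply, cons_val', cons_val_zero,
    cons_val_one, cons_val_fin_one, Pi.star_apply, RCLike.star_def, conj_I, map_one, hK10,
    trace_fin_two]
  simp only [ite_true, ite_false, one_ne_zero, zero_ne_one, smul_eq_mul, add_re, sub_re, mul_re,
    one_re, one_im, I_re, I_im, ofReal_re, ofReal_im, mul_im, sub_im, add_im, div_ofNat_re,
    div_ofNat_im, neg_re, neg_im, zero_re, zero_im]
  ring

lemma mul_trace_sq_le_of_posSemidef {a b : ℝ} (ha : a ≤ 2) {K : Matrix (Fin 2) (Fin 2) ℝ}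
    (hK : Kᵀ = K)
    (hle : (twistedOne b - K.map ofReal * twistedOne a * K.map ofReal).PosSemidef) :
    (2 + a) * K.trace ^ 2 ≤ 4 * (2 + b) := by
  have h := (le_def.mp (hle.dotProduct_mulVec_nonneg ![1, I])).1
  rw [zero_re, re_star_dotProduct_twistedOne_sub_mulVec a b hK] at h
  nlinarith [mul_nonneg (sub_nonneg.mpr ha)
    (add_nonneg (sq_nonneg (K 0 0 - K 1 1)) (mul_nonneg zero_le_four (sq_nonneg (K 0 1))))]

lemma le_two_mul_sqrt_div {t A B : ℝ} (hA : 0 < A) (h : A * t ^ 2 ≤ 4 * B) :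
    t ≤ 2 * √(B / A) :=
  calc t ≤ |t| := le_abs_self t
    _ ≤ √(2 ^ 2 * (B / A)) :=
      Real.abs_le_sqrt (by rw [← mul_div_assoc, le_div_iff₀ hA]; linarith)
    _ = 2 * √(B / A) := by rw [Real.sqrt_mul (by norm_num), Real.sqrt_sq zero_le_two]

lemma posSemidef_one_I_neg_I_one : (!![1, I; -I, 1] : Matrix (Fin 2) (Fin 2) ℂ).PosSemidef := by
  convert posSemidef_vecMulVec_self_star ![1, -I]
  ext i j
  fin_cases i <;> fin_cases j <;> simp [vecMulVec_apply]

lemma twistedOne_sub_smul_one_mul_twistedOne_mul_smul_one {a b c : ℝ}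
    (hc : c ^ 2 * (2 + a) = 2 + b) :
    twistedOne b - (c • (1 : Matrix (Fin 2) (Fin 2) ℝ)).map ofReal * twistedOne a *
        (c • (1 : Matrix (Fin 2) (Fin 2) ℝ)).map ofReal =
      (1 - c ^ 2) • !![1, I; -I, 1] := by
  obtain rfl : b = c ^ 2 * (2 + a) - 2 := by linarith
  ext i j
  fin_cases i <;> fin_cases j <;>
    simp only [twistedOne, Ωc, mul_apply, Fin.sum_univ_two, map_apply, Matrix.sub_apply,
      Matrix.smul_apply, one_apply, of_apply, cons_val', cons_val_zero, cons_val_one,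
      cons_val_fin_one, Fin.zero_eta, Fin.mk_one, Fin.isValue, ite_true, ite_false, one_ne_zero,
      zero_ne_one, smul_eq_mul, real_smul, ofReal_sub, ofReal_mul, ofReal_pow, ofReal_add,
      ofReal_ofNat, ofReal_one, ofReal_zero] <;>
    ring

theorem trace_max_quadratic_constraint_general (a₀ b₀ : ℝ) (ha : |a₀| < 2) (hb : |b₀| < 2)
    (hab : a₀ ≥ b₀) (K : Matrix (Fin 2) (Fin 2) ℝ) (hKs : Kᵀ = K)
    (hle : (((1 : Matrix (Fin 2) (Fin 2) ℂ) - (Complex.I * ((b₀ : ℂ)/2)) • Ωc)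
        - (K.map Complex.ofReal) *
          ((1 : Matrix (Fin 2) (Fin 2) ℂ) - (Complex.I * ((a₀ : ℂ)/2)) • Ωc) *
          (K.map Complex.ofReal)).PosSemidef) :
    K.trace ≤ 2 * Real.sqrt ((2 + b₀)/(2 + a₀)) ∧
    (((1 : Matrix (Fin 2) (Fin 2) ℂ) - (Complex.I * ((b₀ : ℂ)/2)) • Ωc)
        - ((Real.sqrt ((2 + b₀)/(2 + a₀)) • (1 : Matrix (Fin 2) (Fin 2) ℝ)).map Complex.ofReal) *
          ((1 : Matrix (Fin 2) (Fin 2) ℂ) - (Complex.I * ((a₀ : ℂ)/2)) • Ωc) *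
          ((Real.sqrt ((2 + b₀)/(2 + a₀)) • (1 : Matrix (Fin 2) (Fin 2) ℝ)).map Complex.ofReal)).PosSemidef ∧
    (Real.sqrt ((2 + b₀)/(2 + a₀)) • (1 : Matrix (Fin 2) (Fin 2) ℝ)).trace
      = 2 * Real.sqrt ((2 + b₀)/(2 + a₀)) := by
  obtain ⟨ha₁, ha₂⟩ := abs_lt.mp ha
  have hA : 0 < 2 + a₀ := by linarith
  have hB : 0 ≤ 2 + b₀ := by linarith [(abs_lt.mp hb).1]
  set c := √((2 + b₀) / (2 + a₀))
  have hc : c ^ 2 * (2 + a₀) = 2 + b₀ := by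
    rw [Real.sq_sqrt (by positivity), div_mul_cancel₀ _ hA.ne']
  have hc_le_one : c ^ 2 ≤ 1 := by
    rw [Real.sq_sqrt (by positivity), div_le_one hA]
    linarith
  refine ⟨le_two_mul_sqrt_div hA (mul_trace_sq_le_of_posSemidef ha₂.le hKs hle), ?_, ?_⟩
  · convert posSemidef_one_I_neg_I_one.smul (sub_nonneg.mpr hc_le_one) using 1
    exact twistedOne_sub_smul_one_mul_twistedOne_mul_smul_one hc
  · rw [trace_smul, trace_one, Fintype.card_fin, smul_eq_mul, mul_comm]
    norm_num

theorem trace_max_quadratic_constraint (a₀ b₀ : ℝ) (ha : |a₀| < 2) (hb : |b₀| < 2)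
    (hab : a₀ ≥ b₀) (K : Matrix (Fin 2) (Fin 2) ℝ) (hKs : Kᵀ = K) (hK : K.PosSemidef)
    (hle : (((1 : Matrix (Fin 2) (Fin 2) ℂ) - (Complex.I * ((b₀ : ℂ)/2)) • Ωc)
        - (K.map Complex.ofReal) *
          ((1 : Matrix (Fin 2) (Fin 2) ℂ) - (Complex.I * ((a₀ : ℂ)/2)) • Ωc) *
          (K.map Complex.ofReal)).PosSemidef) :
    K.trace ≤ 2 * Real.sqrt ((2 + b₀)/(2 + a₀)) ∧
    (((1 : Matrix (Fin 2) (Fin 2) ℂ) - (Complex.I * ((b₀ : ℂ)/2)) • Ωc)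
        - ((Real.sqrt ((2 + b₀)/(2 + a₀)) • (1 : Matrix (Fin 2) (Fin 2) ℝ)).map Complex.ofReal) *
          ((1 : Matrix (Fin 2) (Fin 2) ℂ) - (Complex.I * ((a₀ : ℂ)/2)) • Ωc) *
          ((Real.sqrt ((2 + b₀)/(2 + a₀)) • (1 : Matrix (Fin 2) (Fin 2) ℝ)).map Complex.ofReal)).PosSemidef ∧
    (Real.sqrt ((2 + b₀)/(2 + a₀)) • (1 : Matrix (Fin 2) (Fin 2) ℝ)).trace
      = 2 * Real.sqrt ((2 + b₀)/(2 + a₀)) :=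
  trace_max_quadratic_constraint_general a₀ b₀ ha hb hab K hKs hle
end

section
/- Let W be a real 2×2 matrix satisfying Wᵀ(1 ± (i/(2ν_B))Ω)W ≤ 1 ± (i/(2ν_A))Ω for both signs, where ν_A, ν_B ≥ 1/2. Then there exists a symmetric positive semidefinite real 2×2 matrix P satisfying the same two inequalities with Tr(P) ≥ Tr(W). -/
/-!
For a real `2 × 2` matrix `X` one has `Xᵀ Ω X = det X • Ω`, so both conditions on `X` read
`(1 - XᵀX) ± i t(X) Ω ⪰ 0` with `t(X) = 1/(2νA) - det X/(2νB)`: they see `X` only through `XᵀX`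
and `det X`. The candidate is `P = |W| = √(WᵀW)`, for which `PᵀP = WᵀW` and `det P = |det W|`,
so `|t(P)| ≤ |t(W)|`; since the set of `s` with `(1 - WᵀW) + i s Ω ⪰ 0` is convex and contains
`± t(W)`, it contains `± t(P)`. Finally `(tr P)² = tr (WᵀW) + 2 |det W| ≥ (tr W)²`.
-/

open Matrix
open scoped ComplexOrder

open scoped MatrixOrder

namespace Matrix

section FinTwo

variable {R : Type*} [CommRing R]

local notation "J" => (!![0, 1; -1, 0] : Matrix (Fin 2) (Fin 2) R)

theorem transpose_mul_J_mul (X : Matrix (Fin 2) (Fin 2) R) : Xᵀ * J * X = X.det • J := by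
  ext i j
  fin_cases i <;> fin_cases j <;> simp [det_fin_two, mul_apply, Fin.sum_univ_two] <;> ring

theorem one_add_smul_J_sub (X : Matrix (Fin 2) (Fin 2) R) (a b : R) :
    (1 + a • J) - Xᵀ * (1 + b • J) * X = (1 - Xᵀ * X) + (a - b * X.det) • J := by
  rw [mul_add, add_mul, mul_one, Matrix.mul_smul, Matrix.smul_mul, transpose_mul_J_mul, smul_smul]
  module

theorem one_sub_smul_J_sub (X : Matrix (Fin 2) (Fin 2) R) (a b : R) :
    (1 - a • J) - Xᵀ * (1 - b • J) * X = (1 - Xᵀ * X) - (a - b * X.det) • J := by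
  simp only [sub_eq_add_neg (1 : Matrix _ _ R), ← neg_smul, one_add_smul_J_sub]
  module

theorem trace_mul_self_fin_two (A : Matrix (Fin 2) (Fin 2) R) :
    (A * A).trace = A.trace ^ 2 - 2 * A.det := by
  simp only [trace_fin_two, det_fin_two, mul_apply, Fin.sum_univ_two]
  ring

end FinTwo

theorem sq_trace_le_trace_transpose_mul_add_abs_det (W : Matrix (Fin 2) (Fin 2) ℝ) :
    W.trace ^ 2 ≤ (Wᵀ * W).trace + 2 * |W.det| := by
  have hdet := le_abs_self W.det
  simp only [trace_fin_two, det_fin_two, mul_apply, Fin.sum_univ_two, transpose_apply] at hdet ⊢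
  nlinarith [sq_nonneg (W 0 1 - W 1 0)]

theorem PosSemidef.add_smul_of_abs_le_one {n 𝕜 : Type*} [RCLike 𝕜] {H K : Matrix n n 𝕜}
    (hadd : (H + K).PosSemidef) (hsub : (H - K).PosSemidef) {r : ℝ} (hr : |r| ≤ 1) :
    (H + r • K).PosSemidef := by
  obtain ⟨hr₁, hr₂⟩ := abs_le.1 hr
  have hconvex : H + r • K = ((1 + r) / 2) • (H + K) + ((1 - r) / 2) • (H - K) := by module
  rw [hconvex]
  exact (hadd.smul (by linarith)).add (hsub.smul (by linarith))

theorem PosSemidef.add_smul_of_abs_le {n 𝕜 : Type*} [RCLike 𝕜] {H K : Matrix n n 𝕜} {t s : ℝ}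
    (hadd : (H + t • K).PosSemidef) (hsub : (H - t • K).PosSemidef) (hst : |s| ≤ |t|) :
    (H + s • K).PosSemidef := by
  rcases eq_or_ne t 0 with rfl | ht
  · rw [abs_zero, abs_nonpos_iff] at hst
    simpa [hst] using hadd
  · have hs : s • K = (s / t) • (t • K) := by rw [smul_smul, div_mul_cancel₀ _ ht]
    rw [hs]
    refine hadd.add_smul_of_abs_le_one hsub ?_
    rw [abs_div]
    exact div_le_one_of_le₀ hst (abs_nonneg _)

section Abs

variable {n : Type*} [Fintype n] [DecidableEq n] (W : Matrix n n ℝ)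

theorem posSemidef_cfcAbs : (CFC.abs W).PosSemidef :=
  nonneg_iff_posSemidef.1 (CFC.abs_nonneg W)

theorem transpose_cfcAbs : (CFC.abs W)ᵀ = CFC.abs W :=
  (conjTranspose_eq_transpose_of_trivial _).symm.trans (posSemidef_cfcAbs W).isHermitian

theorem cfcAbs_mul_cfcAbs : CFC.abs W * CFC.abs W = Wᵀ * W := by
  rw [CFC.abs_mul_abs, star_eq_conjTranspose, conjTranspose_eq_transpose_of_trivial]

theorem det_cfcAbs : (CFC.abs W).det = |W.det| := by
  have hsq : (CFC.abs W).det ^ 2 = |W.det| ^ 2 := by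
    rw [sq, ← det_mul, cfcAbs_mul_cfcAbs, det_mul, det_transpose, sq_abs, sq]
  exact (sq_eq_sq₀ (posSemidef_cfcAbs W).det_nonneg (abs_nonneg _)).1 hsq

end Abs

theorem trace_le_trace_cfcAbs_fin_two (W : Matrix (Fin 2) (Fin 2) ℝ) :
    W.trace ≤ (CFC.abs W).trace := by
  have hsq : W.trace ^ 2 ≤ (CFC.abs W).trace ^ 2 := by
    have := trace_mul_self_fin_two (CFC.abs W)
    rw [cfcAbs_mul_cfcAbs, det_cfcAbs] at this
    linarith [sq_trace_le_trace_transpose_mul_add_abs_det W]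
  exact (le_abs_self _).trans (abs_le_of_sq_le_sq hsq (posSemidef_cfcAbs W).trace_nonneg)

end Matrix

open Complex

theorem abs_sub_abs_div_le {a c : ℝ} (ha : 0 ≤ a) (hc : 0 ≤ c) (d : ℝ) :
    |a - |d| / c| ≤ |a - d / c| := by
  have h := abs_abs_sub_abs_le_abs_sub a (d / c)
  rwa [abs_of_nonneg ha, abs_div, abs_of_nonneg hc] at h

theorem transpose_map_ofReal_mul (X : Matrix (Fin 2) (Fin 2) ℝ) :
    (X.map ofReal)ᵀ * X.map ofReal = (Xᵀ * X).map ofReal := by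
  rw [← transpose_map]
  exact (Matrix.map_mul (f := ofRealHom)).symm

theorem det_map_ofReal (X : Matrix (Fin 2) (Fin 2) ℝ) : (X.map ofReal).det = X.det :=
  (RingHom.map_det ofRealHom X).symm

theorem sub_mul_smul_Ωc (ν μ d : ℝ) :
    (I / (2 * (ν : ℂ)) - I / (2 * (μ : ℂ)) * d) • Ωc = (1 / (2 * ν) - d / (2 * μ)) • (I • Ωc) := by
  rw [← smul_assoc, real_smul]
  push_cast
  ring_nf

theorem one_add_smul_Ωc_sub (ν μ : ℝ) (X : Matrix (Fin 2) (Fin 2) ℝ) :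
    ((1 : Matrix (Fin 2) (Fin 2) ℂ) + (I / (2 * (ν : ℂ))) • Ωc)
      - (X.map ofReal)ᵀ * ((1 : Matrix (Fin 2) (Fin 2) ℂ) + (I / (2 * (μ : ℂ))) • Ωc)
        * X.map ofReal
      = (1 - (Xᵀ * X).map ofReal) + (1 / (2 * ν) - X.det / (2 * μ)) • (I • Ωc) := by
  rw [Ωc, one_add_smul_J_sub, transpose_map_ofReal_mul, det_map_ofReal, ← Ωc, sub_mul_smul_Ωc]

theorem one_sub_smul_Ωc_sub (ν μ : ℝ) (X : Matrix (Fin 2) (Fin 2) ℝ) :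
    ((1 : Matrix (Fin 2) (Fin 2) ℂ) - (I / (2 * (ν : ℂ))) • Ωc)
      - (X.map ofReal)ᵀ * ((1 : Matrix (Fin 2) (Fin 2) ℂ) - (I / (2 * (μ : ℂ))) • Ωc)
        * X.map ofReal
      = (1 - (Xᵀ * X).map ofReal) - (1 / (2 * ν) - X.det / (2 * μ)) • (I • Ωc) := by
  rw [Ωc, one_sub_smul_J_sub, transpose_map_ofReal_mul, det_map_ofReal, ← Ωc, sub_mul_smul_Ωc]

theorem reduce_to_symmetric_psd (νA νB : ℝ) (hA : νA ≥ 1/2) (hB : νB ≥ 1/2)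
    (W : Matrix (Fin 2) (Fin 2) ℝ)
    (hp : (((1 : Matrix (Fin 2) (Fin 2) ℂ) + (Complex.I / (2 * (νA : ℂ))) • Ωc)
        - (W.map Complex.ofReal)ᵀ *
          ((1 : Matrix (Fin 2) (Fin 2) ℂ) + (Complex.I / (2 * (νB : ℂ))) • Ωc) *
          (W.map Complex.ofReal)).PosSemidef)
    (hm : (((1 : Matrix (Fin 2) (Fin 2) ℂ) - (Complex.I / (2 * (νA : ℂ))) • Ωc)
        - (W.map Complex.ofReal)ᵀ *
          ((1 : Matrix (Fin 2) (Fin 2) ℂ) - (Complex.I / (2 * (νB : ℂ))) • Ωc) *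
          (W.map Complex.ofReal)).PosSemidef) :
    ∃ P : Matrix (Fin 2) (Fin 2) ℝ, Pᵀ = P ∧ P.PosSemidef ∧
      (((1 : Matrix (Fin 2) (Fin 2) ℂ) + (Complex.I / (2 * (νA : ℂ))) • Ωc)
        - (P.map Complex.ofReal)ᵀ *
          ((1 : Matrix (Fin 2) (Fin 2) ℂ) + (Complex.I / (2 * (νB : ℂ))) • Ωc) *
          (P.map Complex.ofReal)).PosSemidef ∧
      (((1 : Matrix (Fin 2) (Fin 2) ℂ) - (Complex.I / (2 * (νA : ℂ))) • Ωc)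
        - (P.map Complex.ofReal)ᵀ *
          ((1 : Matrix (Fin 2) (Fin 2) ℂ) - (Complex.I / (2 * (νB : ℂ))) • Ωc) *
          (P.map Complex.ofReal)).PosSemidef ∧
      W.trace ≤ P.trace := by
  rw [one_add_smul_Ωc_sub] at hp
  rw [one_sub_smul_Ωc_sub] at hm
  have ht := abs_sub_abs_div_le (a := 1 / (2 * νA)) (c := 2 * νB) (by positivity) (by positivity)
    W.det
  refine ⟨CFC.abs W, transpose_cfcAbs W, posSemidef_cfcAbs W, ?_, ?_,
    trace_le_trace_cfcAbs_fin_two W⟩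
  · rw [one_add_smul_Ωc_sub, transpose_cfcAbs, cfcAbs_mul_cfcAbs, det_cfcAbs]
    exact hp.add_smul_of_abs_le hm ht
  · rw [one_sub_smul_Ωc_sub, transpose_cfcAbs, cfcAbs_mul_cfcAbs, det_cfcAbs, sub_eq_add_neg,
      ← neg_smul]
    exact hp.add_smul_of_abs_le hm (by rwa [abs_neg])
end

section
/- Von Neumann trace inequality (operator-norm form): for complex n×n matrices X and Y, |Tr(XY)| ≤ ‖X‖_op · ‖Y‖₁, where ‖·‖_op is the operator norm and ‖Y‖₁ = Tr(√(Y*Y)) is the trace norm. -/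
/-!
Diagonalize `Yᴴ Y` in an orthonormal eigenbasis `(vᵢ)` with eigenvalues `λᵢ`. Computing the trace in
this basis gives `|Tr(XY)| ≤ ∑ᵢ |⟪vᵢ, X Y vᵢ⟫| ≤ ‖X‖ ∑ᵢ ‖Y vᵢ‖`, and
`‖Y vᵢ‖² = ⟪vᵢ, Yᴴ Y vᵢ⟫ = λᵢ`, so the last sum is `∑ᵢ √λᵢ = ‖Y‖₁`.
-/

open Matrix
open scoped ComplexOrder

noncomputable def traceNorm {n : ℕ} (Y : Matrix (Fin n) (Fin n) ℂ) : ℝ :=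
  (((Matrix.isHermitian_conjTranspose_mul_self Y).eigenvectorUnitary.1 *
      diagonal (((↑) : ℝ → ℂ) ∘ (√·) ∘ (Matrix.isHermitian_conjTranspose_mul_self Y).eigenvalues) *
      (star (Matrix.isHermitian_conjTranspose_mul_self Y).eigenvectorUnitary : Matrix (Fin n) (Fin n) ℂ)).trace).re

noncomputable def opNorm {n : ℕ} (X : Matrix (Fin n) (Fin n) ℂ) : ℝ :=
  ‖Matrix.toEuclideanCLM (𝕜 := ℂ) (n := Fin n) X‖

open scoped InnerProductSpace

namespace ContinuousLinearMap

variable {𝕜 E ι : Type*} [RCLike 𝕜] [Fintype ι] [NormedAddCommGroup E] [InnerProductSpace 𝕜 E]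

theorem norm_trace_comp_le_opNorm_mul_sum_norm_apply (A B : E →L[𝕜] E)
    (b : OrthonormalBasis ι 𝕜 E) :
    ‖LinearMap.trace 𝕜 E (A ∘L B : E →ₗ[𝕜] E)‖ ≤ ‖A‖ * ∑ i, ‖B (b i)‖ := by
  rw [LinearMap.trace_eq_sum_inner _ b, Finset.mul_sum]
  refine (norm_sum_le _ _).trans (Finset.sum_le_sum fun i _ => ?_)
  calc ‖⟪b i, A (B (b i))⟫_𝕜‖ ≤ ‖b i‖ * ‖A (B (b i))‖ := norm_inner_le_norm _ _
    _ ≤ ‖A‖ * ‖B (b i)‖ := by rw [b.norm_eq_one, one_mul]; exact A.le_opNorm _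

end ContinuousLinearMap

namespace Matrix

variable {𝕜 n : Type*} [RCLike 𝕜] [Fintype n] [DecidableEq n]

theorem trace_toEuclideanLin (M : Matrix n n 𝕜) :
    LinearMap.trace 𝕜 _ (toEuclideanLin M) = M.trace := by
  rw [LinearMap.trace_eq_sum_inner _ (EuclideanSpace.basisFun n 𝕜), Matrix.trace]
  refine Fintype.sum_congr _ _ fun i => ?_
  simp [EuclideanSpace.inner_single_left]

theorem norm_toEuclideanCLM_eigenvectorBasis (Y : Matrix n n 𝕜) (i : n) :
    ‖toEuclideanCLM (n := n) (𝕜 := 𝕜) Y ((isHermitian_conjTranspose_mul_self Y).eigenvectorBasis i)‖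
      = √((isHermitian_conjTranspose_mul_self Y).eigenvalues i) := by
  set hH := isHermitian_conjTranspose_mul_self Y
  have adjoint_comp_self : ContinuousLinearMap.adjoint (toEuclideanCLM (n := n) (𝕜 := 𝕜) Y) ∘L
      toEuclideanCLM (n := n) (𝕜 := 𝕜) Y = toEuclideanCLM (n := n) (𝕜 := 𝕜) (Yᴴ * Y) := by
    rw [map_mul, ← star_eq_conjTranspose, map_star, ContinuousLinearMap.star_eq_adjoint]; rfl
  have apply_eigenvector : toEuclideanCLM (n := n) (𝕜 := 𝕜) (Yᴴ * Y) (hH.eigenvectorBasis i)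
      = (hH.eigenvalues i : 𝕜) • hH.eigenvectorBasis i := by
    conv_lhs => rw [← WithLp.toLp_ofLp (p := 2) (hH.eigenvectorBasis i)]
    rw [toEuclideanCLM_toLp, hH.mulVec_eigenvectorBasis, RCLike.real_smul_eq_coe_smul (K := 𝕜)]
    rfl
  rw [ContinuousLinearMap.apply_norm_eq_sqrt_inner_adjoint_right, adjoint_comp_self,
    apply_eigenvector, inner_smul_right, inner_self_eq_norm_sq_to_K,
    hH.eigenvectorBasis.norm_eq_one]
  simp

end Matrix

theorem traceNorm_eq_sum_sqrt_eigenvalues {n : ℕ} (Y : Matrix (Fin n) (Fin n) ℂ) :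
    traceNorm Y = ∑ i, √((isHermitian_conjTranspose_mul_self Y).eigenvalues i) := by
  rw [traceNorm, trace_mul_cycle, Unitary.coe_star_mul_self, one_mul, trace_diagonal]
  simp

theorem von_neumann_trace_inequality {n : ℕ} (X Y : Matrix (Fin n) (Fin n) ℂ) :
    ‖(X * Y).trace‖ ≤ opNorm X * traceNorm Y := by
  have h := (toEuclideanCLM (n := Fin n) (𝕜 := ℂ) X).norm_trace_comp_le_opNorm_mul_sum_norm_apply
    (toEuclideanCLM (n := Fin n) (𝕜 := ℂ) Y) (isHermitian_conjTranspose_mul_self Y).eigenvectorBasis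
  rw [← ContinuousLinearMap.mul_def, ← map_mul, coe_toEuclideanCLM_eq_toEuclideanLin,
    trace_toEuclideanLin] at h
  simp only [norm_toEuclideanCLM_eigenvectorBasis] at h
  rwa [traceNorm_eq_sum_sqrt_eigenvalues]
end

section
/- Let ν_A ≥ ν_B ≥ 1/2 and let x be a real number. The 4×4 real matrix γ with diagonal blocks ν_A·1, ν_B·1 and off-diagonal blocks x·1 satisfies γ + (i/2)·diag(Ω, -Ω) ≥ 0 and γ - (i/2)·diag(Ω, -Ω) ≥ 0 if and only if x² ≤ (ν_A + 1/2)(ν_B - 1/2). -/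
open Matrix
open scoped ComplexOrder

/-!
In the basis of eigenvectors `(1, ∓i)` of `(i/2)Ω`, taken in both modes, `γ + (i/2)·diag(Ω, -Ω)`
splits into two uncoupled real `2 × 2` blocks `[[ν_A + 1/2, x], [x, ν_B - 1/2]]` and
`[[ν_A - 1/2, x], [x, ν_B + 1/2]]`. It is therefore positive semidefinite iff both blocks are,
i.e. iff `x² ≤ (ν_A + 1/2)(ν_B - 1/2)` and `x² ≤ (ν_A - 1/2)(ν_B + 1/2)`, and the second
condition follows from the first because `ν_A ≥ ν_B`. The other matrix `γ - (i/2)·diag(Ω, -Ω)`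
is the transpose of the first, so it gives the same condition.
-/

noncomputable def Ω : Matrix (Fin 2) (Fin 2) ℝ := !![0, 1; -1, 0]

open ComplexConjugate in
theorem Complex.mul_normSq_add_re_add_mul_normSq_nonneg {a c : ℝ} {b : ℂ} (ha : 0 ≤ a)
    (hc : 0 ≤ c) (hb : normSq b ≤ a * c) (z w : ℂ) :
    0 ≤ a * normSq z + 2 * (conj z * b * w).re + c * normSq w := by
  have complete_square : a * (a * normSq z + 2 * (conj z * b * w).re + c * normSq w) =
      normSq (a * z + b * w) + (a * c - normSq b) * normSq w := by
    simp only [normSq_apply, mul_re, mul_im, add_re, add_im, conj_re, conj_im, ofReal_re,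
      ofReal_im]
    ring
  rcases ha.eq_or_lt with rfl | ha
  · have hb0 : b = 0 := normSq_eq_zero.mp (le_antisymm (by simpa using hb) (normSq_nonneg b))
    simp [hb0, mul_nonneg hc (normSq_nonneg w)]
  · refine nonneg_of_mul_nonneg_right ?_ ha
    rw [complete_square]
    exact add_nonneg (normSq_nonneg _) (mul_nonneg (by linarith) (normSq_nonneg w))

theorem Matrix.posSemidef_fin_two_iff (a c : ℝ) (b : ℂ) :
    !![(a : ℂ), b; star b, c].PosSemidef ↔ 0 ≤ a ∧ 0 ≤ c ∧ Complex.normSq b ≤ a * c := by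
  constructor
  · intro h
    have hdet := h.det_nonneg
    simp only [det_fin_two_of, RCLike.star_def, Complex.mul_conj] at hdet
    exact ⟨by simpa using h.diag_nonneg (i := 0), by simpa using h.diag_nonneg (i := 1),
      sub_nonneg.mp (by exact_mod_cast hdet)⟩
  · rintro ⟨ha, hc, hb⟩
    refine .of_dotProduct_mulVec_nonneg ?_ fun v => ?_
    · ext i j
      fin_cases i <;> fin_cases j <;> simp
    · have quadratic_form : star v ⬝ᵥ (!![(a : ℂ), b; star b, c] *ᵥ v) =
          ((a * Complex.normSq (v 0) + 2 * (star (v 0) * b * v 1).re +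
            c * Complex.normSq (v 1) : ℝ) : ℂ) := by
        simp [dotProduct, mulVec, Fin.sum_univ_two, Complex.ext_iff, Complex.normSq_apply]
        constructor <;> ring
      rw [quadratic_form]
      exact_mod_cast Complex.mul_normSq_add_re_add_mul_normSq_nonneg ha hc hb _ _

theorem Matrix.posSemidef_fromBlocks_zero_iff {m n R : Type*} [Fintype m] [Fintype n]
    [DecidableEq m] [DecidableEq n] [CommRing R] [PartialOrder R] [StarRing R] [AddLeftMono R]
    {A : Matrix m m R} {B : Matrix n n R} :
    (fromBlocks A 0 0 B).PosSemidef ↔ A.PosSemidef ∧ B.PosSemidef := by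
  refine ⟨fun h => ⟨h.submatrix Sum.inl, h.submatrix Sum.inr⟩, fun ⟨hA, hB⟩ => ?_⟩
  have h := (hA.conjTranspose_mul_mul_same (fromCols (1 : Matrix m m R) (0 : Matrix m n R))).add
    (hB.conjTranspose_mul_mul_same (fromCols (0 : Matrix n m R) (1 : Matrix n n R)))
  convert h using 1
  ext (i | i) (j | j) <;> simp [conjTranspose_fromCols_eq_fromRows_conjTranspose]

noncomputable def twoModeCov (νA νB x : ℝ) : Matrix (Fin 2 ⊕ Fin 2) (Fin 2 ⊕ Fin 2) ℂ :=
  (fromBlocks (νA • 1) (x • 1) (x • 1) (νB • 1) :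
    Matrix (Fin 2 ⊕ Fin 2) (Fin 2 ⊕ Fin 2) ℝ).map Complex.ofReal

noncomputable def blockOmega : Matrix (Fin 2 ⊕ Fin 2) (Fin 2 ⊕ Fin 2) ℂ :=
  (fromBlocks Ω 0 0 (-Ω)).map Complex.ofReal

theorem transpose_twoModeCov (νA νB x : ℝ) : (twoModeCov νA νB x)ᵀ = twoModeCov νA νB x := by
  simp [twoModeCov, ← transpose_map, fromBlocks_transpose]

theorem transpose_blockOmega : blockOmegaᵀ = -blockOmega := by
  ext (i | i) (j | j) <;> fin_cases i <;> fin_cases j <;> simp [blockOmega, Ω]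

theorem transpose_twoModeCov_add_smul_blockOmega (νA νB x : ℝ) (c : ℂ) :
    (twoModeCov νA νB x + c • blockOmega)ᵀ = twoModeCov νA νB x - c • blockOmega := by
  rw [transpose_add, transpose_smul, transpose_twoModeCov, transpose_blockOmega, smul_neg,
    sub_eq_add_neg]

/-- Columns: the eigenvector `(1, -i)` of `(i/2)Ω` (eigenvalue `1/2`) in mode A and in mode B,
then the eigenvector `(1, i)` (eigenvalue `-1/2`) in mode A and in mode B. -/
def modeBasis : Matrix (Fin 2 ⊕ Fin 2) (Fin 2 ⊕ Fin 2) ℂ :=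
  fromBlocks !![1, 0; -Complex.I, 0] !![1, 0; Complex.I, 0]
    !![0, 1; 0, -Complex.I] !![0, 1; 0, Complex.I]

theorem star_modeBasis_mul_self : star modeBasis * modeBasis = (2 : ℂ) • 1 := by
  ext (i | i) (j | j) <;> fin_cases i <;> fin_cases j <;>
    simp [modeBasis, mul_apply, Fintype.sum_sum_type, Fin.sum_univ_two, Complex.ext_iff] <;>
    norm_num

theorem isUnit_modeBasis : IsUnit modeBasis := by
  rw [isUnit_iff_isUnit_det]
  refine isUnit_det_of_left_inverse (B := (2⁻¹ : ℂ) • star modeBasis) ?_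
  rw [smul_mul_assoc, star_modeBasis_mul_self, smul_smul]
  norm_num

theorem star_modeBasis_mul_mul_modeBasis (νA νB x : ℝ) :
    star modeBasis * (twoModeCov νA νB x + (Complex.I / 2) • blockOmega) * modeBasis =
      fromBlocks
        !![((2 * νA + 1 : ℝ) : ℂ), ((2 * x : ℝ) : ℂ);
          star ((2 * x : ℝ) : ℂ), ((2 * νB - 1 : ℝ) : ℂ)] 0 0
        !![((2 * νA - 1 : ℝ) : ℂ), ((2 * x : ℝ) : ℂ);
          star ((2 * x : ℝ) : ℂ), ((2 * νB + 1 : ℝ) : ℂ)] := by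
  ext (i | i) (j | j) <;> fin_cases i <;> fin_cases j <;>
    simp [modeBasis, twoModeCov, blockOmega, Ω, mul_apply, Fintype.sum_sum_type, Fin.sum_univ_two,
      Complex.ext_iff, one_apply] <;>
    ring_nf

theorem thermal_coupling_physical_iff (νA νB x : ℝ) (hAB : νA ≥ νB) (hB : νB ≥ 1/2) :
    (((Matrix.fromBlocks (νA • 1) (x • 1) (x • 1) (νB • 1) :
          Matrix (Fin 2 ⊕ Fin 2) (Fin 2 ⊕ Fin 2) ℝ).map Complex.ofReal
        + (Complex.I / 2) • ((Matrix.fromBlocks Ω 0 0 (-Ω)).map Complex.ofReal)).PosSemidef ∧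
     ((Matrix.fromBlocks (νA • 1) (x • 1) (x • 1) (νB • 1) :
          Matrix (Fin 2 ⊕ Fin 2) (Fin 2 ⊕ Fin 2) ℝ).map Complex.ofReal
        - (Complex.I / 2) • ((Matrix.fromBlocks Ω 0 0 (-Ω)).map Complex.ofReal)).PosSemidef)
    ↔ x^2 ≤ (νA + 1/2) * (νB - 1/2) := by
  change (twoModeCov νA νB x + (Complex.I / 2) • blockOmega).PosSemidef ∧
    (twoModeCov νA νB x - (Complex.I / 2) • blockOmega).PosSemidef ↔ _
  rw [← transpose_twoModeCov_add_smul_blockOmega, posSemidef_transpose_iff, and_self,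
    ← isUnit_modeBasis.posSemidef_star_left_conjugate_iff, star_modeBasis_mul_mul_modeBasis,
    posSemidef_fromBlocks_zero_iff, posSemidef_fin_two_iff, posSemidef_fin_two_iff,
    Complex.normSq_ofReal]
  constructor
  · rintro ⟨⟨-, -, h⟩, -⟩
    nlinarith
  · intro h
    refine ⟨⟨?_, ?_, ?_⟩, ?_, ?_, ?_⟩ <;> nlinarith
end

section
/- For real symmetric positive definite 2×2 matrices A and B, Tr(√(√B · A · √B)) = Tr(√(√A · B · √A)). -/
/-!
For a positive semidefinite `2 × 2` matrix `M`, Cayley–Hamilton gives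
`(tr X)² = tr (X²) + 2 det X` for `X = √M`, so `tr √M = √(tr M + 2 √(det M))` depends only
on `tr M` and `det M`. Both `√B A √B` and `√A B √A` have trace `tr (A B)` and determinant
`det A det B`.
-/

open Matrix

section OldSqrt

open scoped ComplexOrder

/-- The square root of a positive semidefinite matrix, as defined in Mathlib (Dec 2024). -/
noncomputable def Matrix.PosSemidef.sqrt {n 𝕜 : Type*} [Fintype n] [DecidableEq n] [RCLike 𝕜]
    {A : Matrix n n 𝕜} (hA : A.PosSemidef) : Matrix n n 𝕜 :=
  hA.1.eigenvectorUnitary.1 * diagonal ((↑) ∘ Real.sqrt ∘ hA.1.eigenvalues) *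
  (star hA.1.eigenvectorUnitary : Matrix n n 𝕜)

theorem Matrix.PosSemidef.posSemidef_sqrt {n 𝕜 : Type*} [Fintype n] [DecidableEq n] [RCLike 𝕜]
    {A : Matrix n n 𝕜} (hA : A.PosSemidef) : hA.sqrt.PosSemidef := by
  unfold Matrix.PosSemidef.sqrt
  apply PosSemidef.mul_mul_conjTranspose_same
  refine posSemidef_diagonal_iff.mpr fun i => ?_
  rw [Function.comp_apply, RCLike.nonneg_iff]
  constructor
  · simp only [Function.comp_apply, RCLike.ofReal_re]
    exact Real.sqrt_nonneg _
  · simp only [Function.comp_apply, RCLike.ofReal_im]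

end OldSqrt

theorem sqrt_conj_psd {A B : Matrix (Fin 2) (Fin 2) ℝ} (hA : A.PosSemidef) (hB : B.PosSemidef) :
    (hB.sqrt * A * hB.sqrt).PosSemidef := by
  have h := hA.mul_mul_conjTranspose_same hB.sqrt
  rwa [hB.posSemidef_sqrt.1] at h

namespace Matrix.PosSemidef

open scoped ComplexOrder MatrixOrder

variable {n 𝕜 : Type*} [Fintype n] [DecidableEq n] [RCLike 𝕜]

theorem sqrt_eq_cfcSqrt {A : Matrix n n 𝕜} (hA : A.PosSemidef) : hA.sqrt = CFC.sqrt A := by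
  rw [CFC.sqrt_eq_cfc, cfc_nnreal_eq_real _ A, hA.1.cfc_eq]
  simp only [IsHermitian.cfc, PosSemidef.sqrt, Unitary.conjStarAlgAut_apply, Function.comp_def,
    Real.coe_sqrt, Real.coe_toNNReal', max_eq_left (hA.eigenvalues_nonneg _)]

theorem sqrt_mul_self {A : Matrix n n 𝕜} (hA : A.PosSemidef) : hA.sqrt * hA.sqrt = A := by
  rw [hA.sqrt_eq_cfcSqrt, CFC.sqrt_mul_sqrt_self A hA.nonneg]

theorem trace_sqrt_mul_mul_sqrt (A : Matrix n n 𝕜) {B : Matrix n n 𝕜} (hB : B.PosSemidef) :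
    (hB.sqrt * A * hB.sqrt).trace = (A * B).trace := by
  rw [trace_mul_cycle, hB.sqrt_mul_self, trace_mul_comm]

theorem det_sqrt_mul_mul_sqrt (A : Matrix n n 𝕜) {B : Matrix n n 𝕜} (hB : B.PosSemidef) :
    (hB.sqrt * A * hB.sqrt).det = A.det * B.det := by
  rw [det_mul, det_mul, mul_right_comm, ← det_mul, hB.sqrt_mul_self, mul_comm]

theorem det_sqrt_eq_sqrt_det {M : Matrix n n ℝ} (hM : M.PosSemidef) : hM.sqrt.det = √M.det := by
  rw [hM.sqrt_eq_cfcSqrt, hM.det_sqrt, RCLike.sqrt_of_nonneg hM.det_nonneg]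
  rfl

end Matrix.PosSemidef

theorem Matrix.trace_sq_fin_two {R : Type*} [CommRing R] (M : Matrix (Fin 2) (Fin 2) R) :
    M.trace ^ 2 = (M * M).trace + 2 * M.det := by
  simp only [trace_fin_two, det_fin_two, mul_apply, Fin.sum_univ_two]
  ring

theorem Matrix.PosSemidef.trace_sqrt_fin_two {M : Matrix (Fin 2) (Fin 2) ℝ}
    (hM : M.PosSemidef) : hM.sqrt.trace = √(M.trace + 2 * √M.det) := by
  rw [← hM.det_sqrt_eq_sqrt_det, ← Real.sqrt_sq hM.posSemidef_sqrt.trace_nonneg,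
    trace_sq_fin_two, hM.sqrt_mul_self]

theorem trace_sqrt_sandwich_symm (A B : Matrix (Fin 2) (Fin 2) ℝ)
    (hA : A.PosDef) (hB : B.PosDef) :
    (sqrt_conj_psd hA.posSemidef hB.posSemidef).sqrt.trace
      = (sqrt_conj_psd hB.posSemidef hA.posSemidef).sqrt.trace := by
  rw [PosSemidef.trace_sqrt_fin_two, PosSemidef.trace_sqrt_fin_two,
    PosSemidef.trace_sqrt_mul_mul_sqrt, PosSemidef.trace_sqrt_mul_mul_sqrt,
    PosSemidef.det_sqrt_mul_mul_sqrt, PosSemidef.det_sqrt_mul_mul_sqrt, trace_mul_comm, mul_comm A.det]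
end

section
/- For ν ≥ 1/2 and θ ≥ 0, the inequality (1/2)(2ν + θ)·D²_Bures ≤ D²_W holds, where D²_W = (√(ν + θ + 1/2) - √(ν - 1/2))² and D²_Bures = 2 - √2·√(4(ν² + νθ) + 1 + √((4ν² - 1)(4(ν+θ)² - 1)))/(2ν + θ). -/
set_option maxHeartbeats 800000 in
lemma aux_key (x y z w : ℝ) (hx : 0 ≤ x) (hy : 0 ≤ y) (hz : 0 ≤ z) (hw : 0 ≤ w)
    (hy2 : y^2 = x^2 + 1) (hw2 : w^2 = z^2 + 1) (hxz : x ≤ z) :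
    2*(x*w) ≤ y*w + x*z := by
  have hyx : x ≤ y := by nlinarith
  have hzw : z ≤ w := by nlinarith
  have hwy : y ≤ w := by nlinarith
  have hw1 : 1 ≤ w := by nlinarith
  have hxw : x ≤ w := le_trans hxz hzw
  have h1 : 0 ≤ w * (y - x) * (w + z - (x + y)) :=
    mul_nonneg (mul_nonneg hw (by linarith)) (by linarith)
  nlinarith [h1, hy2, hw2, hxw, hw1]

set_option maxHeartbeats 800000 in
theorem bures_le_wasserstein_thermal (ν θ : ℝ) (hν : ν ≥ 1/2) (hθ : θ ≥ 0) :
    (1/2) * (2*ν + θ) *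
      (2 - Real.sqrt 2 *
        Real.sqrt (4*(ν^2 + ν*θ) + 1 + Real.sqrt ((4*ν^2 - 1) * (4*(ν+θ)^2 - 1))) / (2*ν + θ))
      ≤ (Real.sqrt (ν + θ + 1/2) - Real.sqrt (ν - 1/2))^2 := by
  set x := Real.sqrt (ν - 1/2) with hxdef
  set z := Real.sqrt (ν + θ - 1/2) with hzdef
  have hx : 0 ≤ x := Real.sqrt_nonneg _
  have hz : 0 ≤ z := Real.sqrt_nonneg _
  have hxa : x^2 = ν - 1/2 := Real.sq_sqrt (by linarith)
  have hza : z^2 = ν + θ - 1/2 := Real.sq_sqrt (by linarith)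
  set y := Real.sqrt (x^2 + 1) with hydef
  set w := Real.sqrt (z^2 + 1) with hwdef
  have hy : 0 ≤ y := Real.sqrt_nonneg _
  have hw : 0 ≤ w := Real.sqrt_nonneg _
  have hy2 : y^2 = x^2 + 1 := Real.sq_sqrt (by positivity)
  have hw2 : w^2 = z^2 + 1 := Real.sq_sqrt (by positivity)
  have hxz : x ≤ z := Real.sqrt_le_sqrt (by linarith)
  have hνA : ν = x^2 + 1/2 := by linarith
  have hθB : θ = z^2 - x^2 := by linarith
  -- rewrite the outer sqrts
  have hwrw : Real.sqrt (ν + θ + 1/2) = w := by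
    rw [show ν + θ + 1/2 = w^2 by linarith, Real.sqrt_sq hw]
  have hxrw : Real.sqrt (ν - 1/2) = x := by
    rw [show ν - 1/2 = x^2 by linarith, Real.sqrt_sq hx]
  -- inner sqrt
  have hprod : (4*ν^2 - 1) * (4*(ν+θ)^2 - 1) = (4*(x*y*z*w))^2 := by
    rw [show (4*(x*y*z*w))^2 = 16*(x^2*(y^2)*(z^2*(w^2))) by ring, hy2, hw2, hνA, hθB]
    ring
  have hsq1 : Real.sqrt ((4*ν^2 - 1) * (4*(ν+θ)^2 - 1)) = 4*(x*y*z*w) := by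
    rw [hprod, Real.sqrt_sq (by positivity)]
  have hxzyw : 0 ≤ x*z + y*w := by positivity
  have key : Real.sqrt 2 *
      Real.sqrt (4*(ν^2 + ν*θ) + 1 + Real.sqrt ((4*ν^2 - 1) * (4*(ν+θ)^2 - 1)))
      = 2*(x*z + y*w) := by
    rw [hsq1, show 4*(ν^2 + ν*θ) + 1 + 4*(x*y*z*w) = 2*(x*z + y*w)^2 by
      rw [show 2*(x*z + y*w)^2 = 2*(x^2*z^2) + 4*(x*y*z*w) + 2*(y^2*(w^2)) by ring,
        hy2, hw2, hνA, hθB]; ring]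
    rw [Real.sqrt_mul (by norm_num : (0:ℝ) ≤ 2), Real.sqrt_sq hxzyw,
      ← mul_assoc, Real.mul_self_sqrt (by norm_num : (0:ℝ) ≤ 2)]
  rw [hwrw, key]
  have hs : 2*ν + θ = x^2 + z^2 + 1 := by linarith
  have hspos : (0:ℝ) < 2*ν + θ := by rw [hs]; positivity
  have hkey : 2*(x*w) ≤ y*w + x*z := aux_key x y z w hx hy hz hw hy2 hw2 hxz
  have hlhs : (1/2) * (2*ν + θ) * (2 - 2*(x*z + y*w) / (2*ν + θ))
      = (2*ν + θ) - (x*z + y*w) := by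
    field_simp
  rw [hlhs, hs]
  nlinarith [hkey, hw2]
end
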